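/- Suppose S is an ε-subspace embedding for the n×p full-rank matrix X with 0 < ε < 0.5. Let β_F = (XᵀX)⁻¹Xᵀy, X̃ = SX, and β_P = (X̃ᵀX̃)⁻¹Xᵀy. Then ‖β_P − β_F‖₂² ≤ (4ε²/σ_min²(X)) · MSS_F, where MSS_F = ‖Xβ_F‖₂² and σ_min(X) is the smallest singular value of X. -/

import Mathlib

/-!
Write `M = XᵀX`, `M̃ = (SX)ᵀ(SX)` and `w = β_P − β_F`. Both estimators solve a normal equation
with the same right-hand side, `M̃ β_P = Xᵀy = M β_F`, so `M̃ w = (M − M̃) β_F` and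
`‖SXw‖² = ⟨Xw, Xβ_F⟩ − ⟨SXw, SXβ_F⟩`. Polarizing the subspace-embedding inequalities bounds
the right-hand side by `(ε/2)(‖Xu‖² + ‖Xv‖²)` for `u = w`, `v = 2ε β_F`, while the left-hand
side is at least `(1 − ε)‖Xw‖²`; for `ε ≤ 1/2` this gives `‖Xw‖² ≤ 4ε² ‖Xβ_F‖²`. Finally
`σ_min² ‖w‖² ≤ ‖Xw‖²` is the Rayleigh bound for `XᵀX`.
-/

open Matrix Finset

/-- A `k × n` matrix `S` is an ε-subspace embedding for an `n × d` matrix `A`. -/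
def IsSubspaceEmbedding {k n d : ℕ} (S : Matrix (Fin k) (Fin n) ℝ)
    (A : Matrix (Fin n) (Fin d) ℝ) (ε : ℝ) : Prop :=
  ∀ z : Fin d → ℝ,
    (1 - ε) * ∑ i, (A.mulVec z i) ^ 2 ≤ ∑ i, ((S * A).mulVec z i) ^ 2 ∧
      ∑ i, ((S * A).mulVec z i) ^ 2 ≤ (1 + ε) * ∑ i, (A.mulVec z i) ^ 2

theorem sum_sq_eq_dotProduct_self {ι R : Type*} [Fintype ι] [Semiring R] (v : ι → R) :
    ∑ i, v i ^ 2 = v ⬝ᵥ v := by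
  simp only [dotProduct, sq]

theorem dotProduct_self_nonneg {ι R : Type*} [Fintype ι] [Ring R] [LinearOrder R]
    [IsStrictOrderedRing R] (v : ι → R) : 0 ≤ v ⬝ᵥ v :=
  Fintype.sum_nonneg fun i => mul_self_nonneg (v i)

theorem dotProduct_transpose_mul_self_mulVec {m n R : Type*} [Fintype m] [Fintype n]
    [CommSemiring R] (A : Matrix m n R) (u v : n → R) :
    u ⬝ᵥ ((Aᵀ * A) *ᵥ v) = (A *ᵥ u) ⬝ᵥ (A *ᵥ v) := by
  rw [← mulVec_mulVec, dotProduct_mulVec, vecMul_transpose]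

theorem Matrix.mulVec_injective_of_rank_eq_card {m n K : Type*} [Fintype n] [Field K]
    {A : Matrix m n K} (h : A.rank = Fintype.card n) : Function.Injective A.mulVec := by
  have hdim := LinearMap.finrank_range_add_finrank_ker A.mulVecLin
  rwa [← Matrix.rank, h, Module.finrank_fintype_fun_eq_card, add_eq_left,
    Submodule.finrank_eq_zero, LinearMap.ker_eq_bot] at hdim

theorem Matrix.mulVec_nonsing_inv_mulVec {m R : Type*} [Fintype m] [DecidableEq m] [CommRing R]
    {M : Matrix m m R} (hM : IsUnit M) (b : m → R) : M *ᵥ (M⁻¹ *ᵥ b) = b := by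
  rw [mulVec_mulVec, mul_nonsing_inv _ ((isUnit_iff_isUnit_det M).mp hM), one_mulVec]

theorem Matrix.PosDef.transpose_mul_self {m n : Type*} [Fintype m] [Fintype n]
    (A : Matrix m n ℝ) (hA : Function.Injective A.mulVec) : (Aᵀ * A).PosDef := by
  simpa only [conjTranspose_eq_transpose_of_trivial] using PosDef.conjTranspose_mul_self A hA

theorem Matrix.PosDef.iInf_eigenvalues_pos {n : Type*} [Fintype n] [DecidableEq n] [Nonempty n]
    {A : Matrix n n ℝ} (hA : A.PosDef) : 0 < ⨅ i, hA.isHermitian.eigenvalues i := by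
  obtain ⟨i, hi⟩ := exists_eq_ciInf_of_finite (f := hA.isHermitian.eigenvalues)
  exact hi ▸ hA.eigenvalues_pos i

theorem Matrix.IsHermitian.posSemidef_sub_smul_one {n : Type*} [Fintype n] [DecidableEq n]
    {A : Matrix n n ℝ} (hA : A.IsHermitian) {c : ℝ} (hc : ∀ i, c ≤ hA.eigenvalues i) :
    (A - c • 1).PosSemidef := by
  have hdiag : diagonal (RCLike.ofReal ∘ hA.eigenvalues) - c • 1
      = diagonal (hA.eigenvalues - fun _ => c) := by
    ext i j
    by_cases h : i = j <;> simp [h]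
  have hconj : A - c • 1 = Unitary.conjStarAlgAut ℝ _ hA.eigenvectorUnitary
      (diagonal (hA.eigenvalues - fun _ => c)) := by
    rw [← hdiag, map_sub, map_smul, map_one, ← hA.spectral_theorem]
  rw [hconj, Unitary.conjStarAlgAut_apply, Unitary.isUnit_coe.posSemidef_star_right_conjugate_iff,
    posSemidef_diagonal_iff]
  exact fun i => sub_nonneg.mpr (hc i)

theorem Matrix.IsHermitian.iInf_eigenvalues_mul_dotProduct_self_le {n : Type*} [Fintype n]
    [DecidableEq n] {A : Matrix n n ℝ} (hA : A.IsHermitian) (x : n → ℝ) :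
    (⨅ i, hA.eigenvalues i) * (x ⬝ᵥ x) ≤ x ⬝ᵥ (A *ᵥ x) := by
  have hpsd := hA.posSemidef_sub_smul_one fun i => ciInf_le (Finite.bddBelow_range _) i
  simpa [sub_mulVec, dotProduct_sub, smul_mulVec] using hpsd.dotProduct_mulVec_nonneg x

namespace IsSubspaceEmbedding

variable {k n p : ℕ} {S : Matrix (Fin k) (Fin n) ℝ} {X : Matrix (Fin n) (Fin p) ℝ} {ε : ℝ}

theorem le_dotProduct_self (hS : IsSubspaceEmbedding S X ε) (z : Fin p → ℝ) :
    (1 - ε) * ((X *ᵥ z) ⬝ᵥ (X *ᵥ z)) ≤ ((S * X) *ᵥ z) ⬝ᵥ ((S * X) *ᵥ z) := by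
  simpa only [sum_sq_eq_dotProduct_self] using (hS z).1

theorem dotProduct_self_le (hS : IsSubspaceEmbedding S X ε) (z : Fin p → ℝ) :
    ((S * X) *ᵥ z) ⬝ᵥ ((S * X) *ᵥ z) ≤ (1 + ε) * ((X *ᵥ z) ⬝ᵥ (X *ᵥ z)) := by
  simpa only [sum_sq_eq_dotProduct_self] using (hS z).2

theorem injective_mulVec (hS : IsSubspaceEmbedding S X ε) (hε : ε < 1)
    (hX : Function.Injective X.mulVec) : Function.Injective (S * X).mulVec := by
  refine (injective_iff_map_eq_zero (S * X).mulVecLin).mpr fun z hz => hX ?_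
  have hlow := hS.le_dotProduct_self z
  simp only [mulVecLin_apply] at hz
  rw [hz, dotProduct_zero] at hlow
  have hpos : 0 < 1 - ε := sub_pos.mpr hε
  have hXz : (X *ᵥ z) ⬝ᵥ (X *ᵥ z) = 0 :=
    le_antisymm (nonpos_of_mul_nonpos_right hlow hpos) (dotProduct_self_nonneg _)
  rw [mulVec_zero, dotProduct_self_eq_zero.mp hXz]

theorem dotProduct_sub_dotProduct_le (hS : IsSubspaceEmbedding S X ε) (u v : Fin p → ℝ) :
    (X *ᵥ u) ⬝ᵥ (X *ᵥ v) - ((S * X) *ᵥ u) ⬝ᵥ ((S * X) *ᵥ v)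
      ≤ ε / 2 * ((X *ᵥ u) ⬝ᵥ (X *ᵥ u) + (X *ᵥ v) ⬝ᵥ (X *ᵥ v)) := by
  have hsum := hS.le_dotProduct_self (u + v)
  have hdiff := hS.dotProduct_self_le (u - v)
  simp only [mulVec_add, mulVec_sub, add_dotProduct, dotProduct_add, sub_dotProduct,
    dotProduct_sub, dotProduct_comm (X *ᵥ v) (X *ᵥ u),
    dotProduct_comm ((S * X) *ᵥ v) ((S * X) *ᵥ u)] at hsum hdiff
  linarith

theorem dotProduct_self_mulVec_sub_le (hS : IsSubspaceEmbedding S X ε) (hε : 0 < ε)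
    (hε2 : ε ≤ 1 / 2) {βF βP : Fin p → ℝ}
    (hβ : ((S * X)ᵀ * (S * X)) *ᵥ βP = (Xᵀ * X) *ᵥ βF) :
    (X *ᵥ (βP - βF)) ⬝ᵥ (X *ᵥ (βP - βF)) ≤ 4 * ε ^ 2 * ((X *ᵥ βF) ⬝ᵥ (X *ᵥ βF)) := by
  set w := βP - βF
  set a := (X *ᵥ w) ⬝ᵥ (X *ᵥ w)
  set c := (X *ᵥ βF) ⬝ᵥ (X *ᵥ βF)
  have hsketch : ((S * X) *ᵥ w) ⬝ᵥ ((S * X) *ᵥ w)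
      = (X *ᵥ w) ⬝ᵥ (X *ᵥ βF) - ((S * X) *ᵥ w) ⬝ᵥ ((S * X) *ᵥ βF) := by
    rw [← dotProduct_transpose_mul_self_mulVec, mulVec_sub, hβ, dotProduct_sub,
      dotProduct_transpose_mul_self_mulVec, dotProduct_transpose_mul_self_mulVec]
  have hpolar := hS.dotProduct_sub_dotProduct_le w ((2 * ε) • βF)
  simp only [mulVec_smul, dotProduct_smul, smul_dotProduct, smul_eq_mul] at hpolar
  have hlow := hS.le_dotProduct_self w
  have hscaled : (3 / 2 - 2 * ε) * a ≤ 2 * ε ^ 2 * c := by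
    refine le_of_mul_le_mul_left ?_ hε
    nlinarith
  nlinarith [mul_nonneg (dotProduct_self_nonneg (X *ᵥ w)) (sub_nonneg.mpr hε2)]

end IsSubspaceEmbedding

/-- Worst-case bound for partial sketching: if `S` is an ε-subspace embedding for the full
column-rank matrix `X` with `0 < ε < 0.5`, then
`‖β_P − β_F‖² ≤ (4ε²/σ_min²(X)) MSS_F`, where `σ_min²(X)` is the smallest eigenvalue of `XᵀX`
(the square of the smallest singular value of `X`) and `MSS_F = ‖Xβ_F‖²`. -/
theorem partial_sketching_worst_case {k n p : ℕ} (ε : ℝ)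
    (S : Matrix (Fin k) (Fin n) ℝ) (y : Fin n → ℝ) (X : Matrix (Fin n) (Fin p) ℝ)
    (hε : 0 < ε) (hε2 : ε < 0.5) (hrank : X.rank = p)
    (hS : IsSubspaceEmbedding S X ε) :
    let βF := (Xᵀ * X)⁻¹.mulVec (Xᵀ.mulVec y)
    let βP := (((S * X)ᵀ * (S * X))⁻¹).mulVec (Xᵀ.mulVec y)
    let MSSF := ∑ i, (X.mulVec βF i) ^ 2
    let σminSq := ⨅ i, (Matrix.isHermitian_conjTranspose_mul_self X).eigenvalues i
    ∑ j, (βP j - βF j) ^ 2 ≤ (4 * ε ^ 2 / σminSq) * MSSF := by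
  intro βF βP MSSF σminSq
  rcases isEmpty_or_nonempty (Fin p) with hp | hp
  · simp [σminSq, Real.iInf_of_isEmpty]
  have hε2' : ε ≤ 1 / 2 := by norm_num at hε2 ⊢; linarith
  have hX : Function.Injective X.mulVec := mulVec_injective_of_rank_eq_card (by simpa using hrank)
  have hXtX := PosDef.transpose_mul_self X hX
  have hSXtSX := PosDef.transpose_mul_self (S * X) (hS.injective_mulVec (by linarith) hX)
  have hβ : ((S * X)ᵀ * (S * X)) *ᵥ βP = (Xᵀ * X) *ᵥ βF := by
    rw [mulVec_nonsing_inv_mulVec hXtX.isUnit, mulVec_nonsing_inv_mulVec hSXtSX.isUnit]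
  have herr := hS.dotProduct_self_mulVec_sub_le hε hε2' hβ
  have hray := (isHermitian_conjTranspose_mul_self X).iInf_eigenvalues_mul_dotProduct_self_le
    (βP - βF)
  have hquad : (βP - βF) ⬝ᵥ ((Xᴴ * X) *ᵥ (βP - βF)) = (X *ᵥ (βP - βF)) ⬝ᵥ (X *ᵥ (βP - βF)) := by
    rw [conjTranspose_eq_transpose_of_trivial, dotProduct_transpose_mul_self_mulVec]
  have hσ : 0 < σminSq := (PosDef.conjTranspose_mul_self X hX).iInf_eigenvalues_pos
  have hsum : ∑ j, (βP j - βF j) ^ 2 = (βP - βF) ⬝ᵥ (βP - βF) := sum_sq_eq_dotProduct_self _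
  rw [hsum, show MSSF = (X *ᵥ βF) ⬝ᵥ (X *ᵥ βF) from sum_sq_eq_dotProduct_self _,
    div_mul_eq_mul_div, le_div_iff₀ hσ]
  linarith
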